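/- Let γ = (D, x, π₁, π₂, (ω_j)_{j∈J}, (η_j)_{j∈J}) be a modular bridge from an (F,H)-metrized quantum vector bundle A₁ = (M₁,⟨·,·⟩₁,D₁,A₁,L₁) to an (F,H)-metrized quantum vector bundle A₂ = (M₂,⟨·,·⟩₂,D₂,A₂,L₂), of length λ. Let I(J) be the set of families (t_j)_{j∈J} ∈ [−1,1]^J with only finitely many nonzero entries and Σ_{j∈J} |t_j| ≤ 1, and for α = (t_j)_{j∈J} ∈ I(J) set ω_α = Σ_{j∈J} t_j ω_j ∈ M₁ and η_α = Σ_{j∈J} t_j η_j ∈ M₂. Then coh(γ) = (D, x, π₁, π₂, (ω_α)_{α∈I(J)}, (η_α)_{α∈I(J)}) is a modular bridge from A₁ to A₂ whose length is at most λ, with the same basic bridge as γ and with deck seminorm equal to that of γ; moreover {ω_α : α ∈ I(J)} and {η_α : α ∈ I(J)} are convex, balanced subsets of M₁ and M₂ respectively. -/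

import Mathlib

noncomputable section

open scoped ENNReal NNReal
open Set Filter Topology

/-! ## Real and imaginary parts in a complex star module -/

def rePart {A : Type*} [AddCommGroup A] [Module ℂ A] [Star A] (a : A) : A :=
  ((2 : ℂ)⁻¹) • (a + star a)

def imPart {A : Type*} [AddCommGroup A] [Module ℂ A] [Star A] (a : A) : A :=
  ((2 * Complex.I)⁻¹) • (a - star a)

/-! ## Permissible functions -/

def Permissible (F : ℝ≥0 → ℝ≥0 → ℝ≥0 → ℝ≥0 → ℝ≥0) : Prop :=
  (∀ ⦃x₁ x₂ y₁ y₂ l₁ l₂ m₁ m₂ : ℝ≥0⦄, x₁ ≤ x₂ → y₁ ≤ y₂ → l₁ ≤ l₂ → m₁ ≤ m₂ →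
      F x₁ y₁ l₁ m₁ ≤ F x₂ y₂ l₂ m₂) ∧
  ∀ x y l m : ℝ≥0, x * m + y * l ≤ F x y l m

def PermissiblePair (F : ℝ≥0 → ℝ≥0 → ℝ≥0 → ℝ≥0 → ℝ≥0) (H : ℝ≥0 → ℝ≥0 → ℝ≥0) : Prop :=
  Permissible F ∧
  (∀ ⦃x₁ x₂ y₁ y₂ : ℝ≥0⦄, x₁ ≤ x₂ → y₁ ≤ y₂ → H x₁ y₁ ≤ H x₂ y₂) ∧
  ∀ x y : ℝ≥0, 2 * x * y ≤ H x y

def PermissibleTriple (F : ℝ≥0 → ℝ≥0 → ℝ≥0 → ℝ≥0 → ℝ≥0)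
    (G : ℝ≥0 → ℝ≥0 → ℝ≥0 → ℝ≥0) (H : ℝ≥0 → ℝ≥0 → ℝ≥0) : Prop :=
  PermissiblePair F H ∧
  (∀ ⦃x₁ x₂ y₁ y₂ z₁ z₂ : ℝ≥0⦄, x₁ ≤ x₂ → y₁ ≤ y₂ → z₁ ≤ z₂ → G x₁ y₁ z₁ ≤ G x₂ y₂ z₂) ∧
  ∀ x y z : ℝ≥0, (x + y) * z ≤ G x y z

/-! ## Hausdorff distance for an `ℝ≥0∞`-valued distance function -/

def ennHausdorff {X : Type*} (d : X → X → ℝ≥0∞) (s t : Set X) : ℝ≥0∞ :=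
  max (⨆ x ∈ s, ⨅ y ∈ t, d x y) (⨆ y ∈ t, ⨅ x ∈ s, d x y)

/-! ## States of a unital C*-algebra and the Monge-Kantorovich metric -/

structure State (A : Type) [NormedRing A] [StarRing A] [NormedAlgebra ℂ A] : Type where
  toFun : A →L[ℂ] ℂ
  map_one : toFun 1 = 1
  pos_re : ∀ a : A, 0 ≤ (toFun (star a * a)).re
  pos_im : ∀ a : A, (toFun (star a * a)).im = 0

instance {A : Type} [NormedRing A] [StarRing A] [NormedAlgebra ℂ A] :
    TopologicalSpace (State A) :=
  TopologicalSpace.induced (fun φ (a : A) => φ.toFun a) inferInstance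

def mkDist {A : Type} [NormedRing A] [StarRing A] [NormedAlgebra ℂ A]
    (L : A → ℝ≥0∞) (φ ψ : State A) : ℝ≥0∞ :=
  ⨆ a ∈ {a : A | L a ≤ 1}, (‖φ.toFun a - ψ.toFun a‖₊ : ℝ≥0∞)

/-- The Monge-Kantorovich (pseudo)metric associated with `L` is a metric which
metrizes the weak* topology on the state space. -/
def Metrizes {A : Type} [NormedRing A] [StarRing A] [NormedAlgebra ℂ A] (L : A → ℝ≥0∞) : Prop :=
  (∀ φ ψ : State A, mkDist L φ ψ ≠ ⊤) ∧
  ∀ (φ : State A) (s : Set (State A)),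
    s ∈ nhds φ ↔ ∃ ε : ℝ≥0∞, 0 < ε ∧ {ψ : State A | mkDist L φ ψ < ε} ⊆ s

/-! ## Quasi-Leibniz quantum compact metric spaces -/

def QuasiLeibnizL (F : ℝ≥0 → ℝ≥0 → ℝ≥0 → ℝ≥0 → ℝ≥0) {A : Type}
    [NormedRing A] [StarRing A] [NormedAlgebra ℂ A] (L : A → ℝ≥0∞) : Prop :=
  ∀ a b : A, L a ≠ ⊤ → L b ≠ ⊤ →
    L (rePart (a * b)) ≤ (F ‖a‖₊ ‖b‖₊ (L a).toNNReal (L b).toNNReal : ℝ≥0∞) ∧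
    L (imPart (a * b)) ≤ (F ‖a‖₊ ‖b‖₊ (L a).toNNReal (L b).toNNReal : ℝ≥0∞)

def QCMSAxioms (F : ℝ≥0 → ℝ≥0 → ℝ≥0 → ℝ≥0 → ℝ≥0) (A : Type)
    [NormedRing A] [StarRing A] [NormedAlgebra ℂ A] (L : A → ℝ≥0∞) : Prop :=
  (∀ a : A, L a ≠ ⊤ → IsSelfAdjoint a) ∧
  (∀ a b : A, L (a + b) ≤ L a + L b) ∧
  (∀ (r : ℝ) (a : A), L (r • a) = (‖r‖₊ : ℝ≥0∞) * L a) ∧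
  (∀ a : A, IsSelfAdjoint a → a ∈ closure {b : A | L b ≠ ⊤}) ∧
  (∀ a : A, L a = 0 ↔ ∃ r : ℝ, a = r • (1 : A)) ∧
  LowerSemicontinuous L ∧
  Metrizes L ∧
  QuasiLeibnizL F L

/-- A bundled `F`-quasi-Leibniz quantum compact metric space. -/
structure QCMS (F : ℝ≥0 → ℝ≥0 → ℝ≥0 → ℝ≥0 → ℝ≥0) : Type 1 where
  carrier : Type
  [nr : NormedRing carrier]
  [sr : StarRing carrier]
  [cstar : CStarRing carrier]
  [na : NormedAlgebra ℂ carrier]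
  [sm : StarModule ℂ carrier]
  [cp : CompleteSpace carrier]
  L : carrier → ℝ≥0∞
  ax : QCMSAxioms F carrier L

attribute [instance] QCMS.nr QCMS.sr QCMS.cstar QCMS.na QCMS.sm QCMS.cp

variable {F : ℝ≥0 → ℝ≥0 → ℝ≥0 → ℝ≥0 → ℝ≥0} {H : ℝ≥0 → ℝ≥0 → ℝ≥0}
variable {G : ℝ≥0 → ℝ≥0 → ℝ≥0 → ℝ≥0}

/-- Diameter of the state space for the Monge-Kantorovich metric. -/
def QCMS.diam (A : QCMS F) : ℝ≥0∞ :=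
  ⨆ φ : State A.carrier, ⨆ ψ : State A.carrier, mkDist A.L φ ψ

/-! ## Quantum isometries and tunnels -/

def QuantumIsometryProps (D A : QCMS F) (π : D.carrier →⋆ₐ[ℂ] A.carrier) : Prop :=
  Function.Surjective π ∧
  ∀ a : A.carrier, A.L a ≠ ⊤ → A.L a = ⨅ d ∈ {d : D.carrier | π d = a}, D.L d

structure QuantumIsometry (D A : QCMS F) : Type where
  toHom : D.carrier →⋆ₐ[ℂ] A.carrier
  prop : QuantumIsometryProps D A toHom

structure FullQuantumIsometry (A B : QCMS F) : Type where
  toEquiv : A.carrier ≃⋆ₐ[ℂ] B.carrier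
  isometric : ∀ a : A.carrier, B.L (toEquiv a) = A.L a

def pullbackStates {D A : QCMS F} (π : D.carrier →⋆ₐ[ℂ] A.carrier) :
    Set (State D.carrier) :=
  {χ : State D.carrier | ∃ φ : State A.carrier, ∀ d : D.carrier, χ.toFun d = φ.toFun (π d)}

structure Tunnel (A B : QCMS F) : Type 1 where
  mid : QCMS F
  πA : QuantumIsometry mid A
  πB : QuantumIsometry mid B

def Tunnel.extent {A B : QCMS F} (τ : Tunnel A B) : ℝ≥0∞ :=
  max (ennHausdorff (mkDist τ.mid.L) univ (pullbackStates τ.πA.toHom))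
      (ennHausdorff (mkDist τ.mid.L) univ (pullbackStates τ.πB.toHom))

def Tunnel.targetSet {A B : QCMS F} (τ : Tunnel A B) (a : A.carrier) (l : ℝ≥0∞) :
    Set B.carrier :=
  {b | ∃ d : τ.mid.carrier, τ.πA.toHom d = a ∧ τ.mid.L d ≤ l ∧ τ.πB.toHom d = b}

/-- The dual Gromov-Hausdorff propinquity. -/
def dualPropinquity (A B : QCMS F) : ℝ≥0∞ := ⨅ τ : Tunnel A B, τ.extent
/-! ## Hilbert modules and metrized quantum vector bundles -/

def HilbertModAxioms (A : Type) [NormedRing A] [StarRing A] [NormedAlgebra ℂ A]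
    (M : Type) [NormedAddCommGroup M] [Module ℂ M] [Module A M] [IsScalarTower ℂ A M]
    (ip : M → M → A) : Prop :=
  (∀ ω η ζ : M, ip (ω + η) ζ = ip ω ζ + ip η ζ) ∧
  (∀ (a : A) (ω η : M), ip (a • ω) η = a * ip ω η) ∧
  (∀ ω η : M, ip ω η = star (ip η ω)) ∧
  (∀ ω : M, ∃ b : A, ip ω ω = star b * b) ∧
  (∀ ω : M, ip ω ω = 0 → ω = 0) ∧
  (∀ ω : M, ‖ω‖ = Real.sqrt ‖ip ω ω‖)

def DNormAxioms (H : ℝ≥0 → ℝ≥0 → ℝ≥0) {A : Type}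
    [NormedRing A] [StarRing A] [NormedAlgebra ℂ A] (L : A → ℝ≥0∞)
    {M : Type} [NormedAddCommGroup M] [Module ℂ M]
    (ip : M → M → A) (Dn : M → ℝ≥0∞) : Prop :=
  (∀ ω η : M, Dn (ω + η) ≤ Dn ω + Dn η) ∧
  (∀ (c : ℂ) (ω : M), Dn (c • ω) = (‖c‖₊ : ℝ≥0∞) * Dn ω) ∧
  Dense {ω : M | Dn ω ≠ ⊤} ∧
  (∀ ω : M, (‖ω‖₊ : ℝ≥0∞) ≤ Dn ω) ∧
  IsCompact {ω : M | Dn ω ≤ 1} ∧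
  ∀ ω η : M, Dn ω ≠ ⊤ → Dn η ≠ ⊤ →
    L (rePart (ip ω η)) ≤ (H (Dn ω).toNNReal (Dn η).toNNReal : ℝ≥0∞) ∧
    L (imPart (ip ω η)) ≤ (H (Dn ω).toNNReal (Dn η).toNNReal : ℝ≥0∞)

/-- A bundled `(F,H)`-metrized quantum vector bundle. -/
structure MQVB (F : ℝ≥0 → ℝ≥0 → ℝ≥0 → ℝ≥0 → ℝ≥0) (H : ℝ≥0 → ℝ≥0 → ℝ≥0) : Type 1 where
  base : QCMS F
  carrier : Type
  [ag : NormedAddCommGroup carrier]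
  [mc : Module ℂ carrier]
  [ma : Module base.carrier carrier]
  [st : IsScalarTower ℂ base.carrier carrier]
  [cp : CompleteSpace carrier]
  ip : carrier → carrier → base.carrier
  Dn : carrier → ℝ≥0∞
  hilbert : HilbertModAxioms base.carrier carrier ip
  dnorm : DNormAxioms H base.L ip Dn

attribute [instance] MQVB.ag MQVB.mc MQVB.ma MQVB.st MQVB.cp

/-- The modular Monge-Kantorovich metric. -/
def MQVB.mkD {F H} (Am : MQVB F H) (ω η : Am.carrier) : ℝ≥0∞ :=
  ⨆ ζ ∈ {ζ : Am.carrier | Am.Dn ζ ≤ 1}, (‖Am.ip (ω - η) ζ‖₊ : ℝ≥0∞)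

/-! ## Modular quantum isometries, modular tunnels, dual modular propinquity -/

def ModularQIProps {F H} (Dm Am : MQVB F H)
    (θ : Dm.base.carrier →⋆ₐ[ℂ] Am.base.carrier) (Θ : Dm.carrier →ₗ[ℂ] Am.carrier) : Prop :=
  QuantumIsometryProps Dm.base Am.base θ ∧
  (∀ (a : Dm.base.carrier) (ω : Dm.carrier), Θ (a • ω) = θ a • Θ ω) ∧
  (∀ ω η : Dm.carrier, θ (Dm.ip ω η) = Am.ip (Θ ω) (Θ η)) ∧
  Function.Surjective Θ ∧
  ∀ ω : Am.carrier, Am.Dn ω ≠ ⊤ → Am.Dn ω = ⨅ η ∈ {η : Dm.carrier | Θ η = ω}, Dm.Dn η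

structure ModularQI {F H} (Dm Am : MQVB F H) : Type where
  θ : Dm.base.carrier →⋆ₐ[ℂ] Am.base.carrier
  Θ : Dm.carrier →ₗ[ℂ] Am.carrier
  prop : ModularQIProps Dm Am θ Θ

/-- A full modular quantum isometry. -/
structure FullModularQI {F H} (Am Bm : MQVB F H) : Type where
  θ : FullQuantumIsometry Am.base Bm.base
  Θ : Am.carrier ≃ₗ[ℂ] Bm.carrier
  map_smul : ∀ (a : Am.base.carrier) (ω : Am.carrier), Θ (a • ω) = θ.toEquiv a • Θ ω
  map_ip : ∀ ω η : Am.carrier, θ.toEquiv (Am.ip ω η) = Bm.ip (Θ ω) (Θ η)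
  dn_eq : ∀ ω : Am.carrier, Bm.Dn (Θ ω) = Am.Dn ω

structure ModularTunnel {F H} (Am Bm : MQVB F H) : Type 1 where
  mid : MQVB F H
  QA : ModularQI mid Am
  QB : ModularQI mid Bm

def ModularTunnel.baseTunnel {F H} {Am Bm : MQVB F H} (τ : ModularTunnel Am Bm) :
    Tunnel Am.base Bm.base :=
  ⟨τ.mid.base, ⟨τ.QA.θ, τ.QA.prop.1⟩, ⟨τ.QB.θ, τ.QB.prop.1⟩⟩

def ModularTunnel.extent {F H} {Am Bm : MQVB F H} (τ : ModularTunnel Am Bm) : ℝ≥0∞ :=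
  τ.baseTunnel.extent

def ModularTunnel.targetSet {F H} {Am Bm : MQVB F H} (τ : ModularTunnel Am Bm)
    (ω : Am.carrier) (l : ℝ≥0∞) : Set Bm.carrier :=
  {η | ∃ ζ : τ.mid.carrier, τ.QA.Θ ζ = ω ∧ τ.mid.Dn ζ ≤ l ∧ τ.QB.Θ ζ = η}

/-- The dual modular Gromov-Hausdorff propinquity. -/
def dualModularPropinquity {F H} (Am Bm : MQVB F H) : ℝ≥0∞ :=
  ⨅ τ : ModularTunnel Am Bm, τ.extent
/-! ## Bridges and modular bridges -/

structure Bridge {F} (A B : QCMS F) : Type 1 where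
  amb : Type
  [nr : NormedRing amb]
  [sr : StarRing amb]
  [cstar : CStarRing amb]
  [na : NormedAlgebra ℂ amb]
  [sm : StarModule ℂ amb]
  [cp : CompleteSpace amb]
  x : amb
  πA : A.carrier →⋆ₐ[ℂ] amb
  πB : B.carrier →⋆ₐ[ℂ] amb
  injA : Function.Injective πA
  injB : Function.Injective πB
  pivot : ∃ φ : State amb, ∀ d : amb,
    φ.toFun (d * x) = φ.toFun d ∧ φ.toFun (x * d) = φ.toFun d

attribute [instance] Bridge.nr Bridge.sr Bridge.cstar Bridge.na Bridge.sm Bridge.cp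

/-- The bridge seminorm. -/
def Bridge.bn {F} {A B : QCMS F} (γ : Bridge A B) (a : A.carrier) (b : B.carrier) : ℝ≥0∞ :=
  (‖γ.πA a * γ.x - γ.x * γ.πB b‖₊ : ℝ≥0∞)

/-- The set `S₁(D|x)` of states for which `x` acts as a unit. -/
def Bridge.S1 {F} {A B : QCMS F} (γ : Bridge A B) : Set (State γ.amb) :=
  {φ : State γ.amb | ∀ d : γ.amb,
    φ.toFun (d * γ.x) = φ.toFun d ∧ φ.toFun (γ.x * d) = φ.toFun d}

def Bridge.height {F} {A B : QCMS F} (γ : Bridge A B) : ℝ≥0∞ :=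
  max (ennHausdorff (mkDist A.L) univ
        {ψ : State A.carrier | ∃ φ ∈ γ.S1, ∀ a : A.carrier, ψ.toFun a = φ.toFun (γ.πA a)})
      (ennHausdorff (mkDist B.L) univ
        {ψ : State B.carrier | ∃ φ ∈ γ.S1, ∀ b : B.carrier, ψ.toFun b = φ.toFun (γ.πB b)})

def Bridge.reach {F} {A B : QCMS F} (γ : Bridge A B) : ℝ≥0∞ :=
  max (⨆ a ∈ {a : A.carrier | A.L a ≤ 1}, ⨅ b ∈ {b : B.carrier | B.L b ≤ 1}, γ.bn a b)
      (⨆ b ∈ {b : B.carrier | B.L b ≤ 1}, ⨅ a ∈ {a : A.carrier | A.L a ≤ 1}, γ.bn a b)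

def Bridge.length {F} {A B : QCMS F} (γ : Bridge A B) : ℝ≥0∞ :=
  max γ.height γ.reach

/-- A modular bridge between two metrized quantum vector bundles. -/
structure ModularBridge {F H} (Am Bm : MQVB F H) : Type 1 where
  J : Type
  toBridge : Bridge Am.base Bm.base
  x_norm : ‖toBridge.x‖ = 1
  anchor : J → Am.carrier
  coanchor : J → Bm.carrier
  anchor_le : ∀ j : J, Am.Dn (anchor j) ≤ 1
  coanchor_le : ∀ j : J, Bm.Dn (coanchor j) ≤ 1

/-- The deck seminorm of a modular bridge. -/
def ModularBridge.deck {F H} {Am Bm : MQVB F H} (γ : ModularBridge Am Bm)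
    (ω : Am.carrier) (η : Bm.carrier) : ℝ≥0∞ :=
  ⨆ j : γ.J,
    max (γ.toBridge.bn (Am.ip ω (γ.anchor j)) (Bm.ip η (γ.coanchor j)))
        (γ.toBridge.bn (Am.ip (γ.anchor j) ω) (Bm.ip (γ.coanchor j) η))

def ModularBridge.imprint {F H} {Am Bm : MQVB F H} (γ : ModularBridge Am Bm) : ℝ≥0∞ :=
  max (ennHausdorff Am.mkD (range γ.anchor) {ω : Am.carrier | Am.Dn ω ≤ 1})
      (ennHausdorff Bm.mkD (range γ.coanchor) {η : Bm.carrier | Bm.Dn η ≤ 1})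

def ModularBridge.modularReach {F H} {Am Bm : MQVB F H} (γ : ModularBridge Am Bm) : ℝ≥0∞ :=
  ⨆ j : γ.J, γ.deck (γ.anchor j) (γ.coanchor j)

def ModularBridge.length {F H} {Am Bm : MQVB F H} (γ : ModularBridge Am Bm) : ℝ≥0∞ :=
  max γ.toBridge.length (γ.imprint + γ.modularReach)

/-! ## Metrical quantum vector bundles -/

/-- An `(F,G,H)`-metrical quantum vector bundle. -/
structure MetQVB (F : ℝ≥0 → ℝ≥0 → ℝ≥0 → ℝ≥0 → ℝ≥0) (G : ℝ≥0 → ℝ≥0 → ℝ≥0 → ℝ≥0)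
    (H : ℝ≥0 → ℝ≥0 → ℝ≥0) : Type 1 where
  toMQVB : MQVB F H
  alt : QCMS F
  act : alt.carrier →ₐ[ℂ] Module.End ℂ toMQVB.carrier
  act_star : ∀ (b : alt.carrier) (ω η : toMQVB.carrier),
    toMQVB.ip (act (star b) ω) η = toMQVB.ip ω (act b η)
  act_G : ∀ (b : alt.carrier) (ω : toMQVB.carrier), alt.L b ≠ ⊤ → toMQVB.Dn ω ≠ ⊤ →
    toMQVB.Dn (act b ω) ≤ (G ‖b‖₊ (alt.L b).toNNReal ‖ω‖₊ : ℝ≥0∞)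

/-- A metrical tunnel between metrical quantum vector bundles. -/
structure MetTunnel {F G H} (Am Bm : MetQVB F G H) : Type 1 where
  modTun : ModularTunnel Am.toMQVB Bm.toMQVB
  altTun : Tunnel Am.alt Bm.alt
  act : altTun.mid.carrier →ₐ[ℂ] Module.End ℂ modTun.mid.carrier
  act_G : ∀ (d : altTun.mid.carrier) (ξ : modTun.mid.carrier),
    IsSelfAdjoint d → altTun.mid.L d ≠ ⊤ → modTun.mid.Dn ξ ≠ ⊤ →
    modTun.mid.Dn (act d ξ) ≤
      (G ‖d‖₊ (altTun.mid.L d).toNNReal (modTun.mid.Dn ξ).toNNReal : ℝ≥0∞)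
  compatA : ∀ (d : altTun.mid.carrier) (ξ : modTun.mid.carrier),
    modTun.QA.Θ (act d ξ) = Am.act (altTun.πA.toHom d) (modTun.QA.Θ ξ)
  compatB : ∀ (d : altTun.mid.carrier) (ξ : modTun.mid.carrier),
    modTun.QB.Θ (act d ξ) = Bm.act (altTun.πB.toHom d) (modTun.QB.Θ ξ)

def MetTunnel.extent {F G H} {Am Bm : MetQVB F G H} (τ : MetTunnel Am Bm) : ℝ≥0∞ :=
  max τ.modTun.extent τ.altTun.extent

/-- The dual metrical Gromov-Hausdorff propinquity. -/
def dualMetricalPropinquity {F G H} (Am Bm : MetQVB F G H) : ℝ≥0∞ :=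
  ⨅ τ : MetTunnel Am Bm, τ.extent

/-- A full metrical quantum isometry. -/
structure FullMetricalQI {F G H} (Am Bm : MetQVB F G H) : Type where
  toFullModular : FullModularQI Am.toMQVB Bm.toMQVB
  π : FullQuantumIsometry Am.alt Bm.alt
  compat : ∀ (b : Am.alt.carrier) (ω : Am.toMQVB.carrier),
    toFullModular.Θ (Am.act b ω) = Bm.act (π.toEquiv b) (toFullModular.Θ ω)

/-! ## STATEMENT 0 -/

/-- The index set `I(J)`: finitely supported families in `[-1,1]` with `∑ |t j| ≤ 1`. -/
def IndexIJ (J : Type) : Type :=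
  {t : J →₀ ℝ // (∀ j : J, |t j| ≤ 1) ∧ ∑ j ∈ t.support, |t j| ≤ 1}

/-- The anchors `ω_α = ∑_j t_j ω_j` of the coherent bridge. -/
def cohAnchor {F : ℝ≥0 → ℝ≥0 → ℝ≥0 → ℝ≥0 → ℝ≥0} {H : ℝ≥0 → ℝ≥0 → ℝ≥0}
    {Am Bm : MQVB F H} (γ : ModularBridge Am Bm) (α : IndexIJ γ.J) : Am.carrier :=
  ∑ j ∈ α.1.support, α.1 j • γ.anchor j

/-- The co-anchors `η_α = ∑_j t_j η_j` of the coherent bridge. -/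
def cohCoanchor {F : ℝ≥0 → ℝ≥0 → ℝ≥0 → ℝ≥0 → ℝ≥0} {H : ℝ≥0 → ℝ≥0 → ℝ≥0}
    {Am Bm : MQVB F H} (γ : ModularBridge Am Bm) (α : IndexIJ γ.J) : Bm.carrier :=
  ∑ j ∈ α.1.support, α.1 j • γ.coanchor j

/-! The D-norm, and the bridge seminorm evaluated at pairs of inner products with anchors, are
subadditive and absolutely homogeneous, so their sublevel sets are stable under the combinations
`∑ⱼ tⱼ vⱼ` with `∑ⱼ |tⱼ| ≤ 1`. Hence the new anchors stay in the unit balls of the D-norms, the deck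
seminorm does not change and the modular reach does not grow; since the new anchor sets contain
the old ones and still lie in the unit balls, the imprint does not grow either. The new anchor
sets are linear images of the closed unit ball of the `ℓ¹` norm on `J →₀ ℝ`, hence convex and
balanced. -/

namespace Finsupp

variable {J : Type*}

lemma sum_abs_eq_of_support_subset {t : J →₀ ℝ} {s : Finset J} (h : t.support ⊆ s) :
    ∑ j ∈ t.support, |t j| = ∑ j ∈ s, |t j| :=
  Finset.sum_subset h fun j _ hj => by rw [notMem_support_iff.mp hj, abs_zero]

lemma abs_apply_le_sum_abs (t : J →₀ ℝ) (j : J) : |t j| ≤ ∑ k ∈ t.support, |t k| := by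
  by_cases hj : j ∈ t.support
  · exact Finset.single_le_sum (fun k _ => abs_nonneg (t k)) hj
  · rw [notMem_support_iff.mp hj, abs_zero]
    exact Finset.sum_nonneg fun k _ => abs_nonneg (t k)

def l1Seminorm : Seminorm ℝ (J →₀ ℝ) :=
  Seminorm.of (fun t => ∑ j ∈ t.support, |t j|)
    (fun t s => by
      classical
      have hU : (t + s).support ⊆ t.support ∪ s.support := support_add
      calc ∑ j ∈ (t + s).support, |(t + s) j|
          = ∑ j ∈ t.support ∪ s.support, |t j + s j| := sum_abs_eq_of_support_subset hU
        _ ≤ ∑ j ∈ t.support ∪ s.support, (|t j| + |s j|) :=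
          Finset.sum_le_sum fun j _ => abs_add_le (t j) (s j)
        _ = ∑ j ∈ t.support, |t j| + ∑ j ∈ s.support, |s j| := by
          rw [Finset.sum_add_distrib, ← sum_abs_eq_of_support_subset Finset.subset_union_left,
            ← sum_abs_eq_of_support_subset Finset.subset_union_right])
    (fun a t => by
      rw [sum_abs_eq_of_support_subset support_smul, Real.norm_eq_abs, Finset.mul_sum]
      simp only [coe_smul, Pi.smul_apply, smul_eq_mul, abs_mul])

lemma l1Seminorm_apply (t : J →₀ ℝ) : l1Seminorm t = ∑ j ∈ t.support, |t j| := rfl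

end Finsupp

lemma Balanced.linear_image {𝕜 E E' : Type*} [SeminormedRing 𝕜] [AddCommGroup E] [Module 𝕜 E]
    [AddCommGroup E'] [Module 𝕜 E'] {s : Set E} (hs : Balanced 𝕜 s) (f : E →ₗ[𝕜] E') :
    Balanced 𝕜 (f '' s) := by
  rw [balanced_iff_smul_mem] at hs ⊢
  rintro a ha _ ⟨x, hx, rfl⟩
  exact ⟨a • x, hs ha hx, map_smul f a x⟩

namespace IndexIJ

variable {J : Type} {M : Type*} [AddCommGroup M] [Module ℝ M]

def single (j : J) : IndexIJ J :=
  ⟨Finsupp.single j 1, fun k => by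
    classical
    rw [Finsupp.single_apply]
    split_ifs <;> simp, by
    rw [Finsupp.support_single j one_ne_zero, Finset.sum_singleton,
      Finsupp.single_eq_same, abs_one]⟩

lemma sum_smul_single (j : J) (v : J → M) :
    ∑ k ∈ (single j).1.support, (single j).1 k • v k = v j := by
  show ∑ k ∈ (Finsupp.single j (1 : ℝ)).support, Finsupp.single j (1 : ℝ) k • v k = v j
  rw [Finsupp.support_single j one_ne_zero, Finset.sum_singleton,
    Finsupp.single_eq_same, one_smul]

lemma sum_nnnorm_le_one (α : IndexIJ J) : ∑ j ∈ α.1.support, ‖α.1 j‖₊ ≤ 1 := by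
  rw [← NNReal.coe_le_coe, NNReal.coe_sum, NNReal.coe_one]
  simpa only [coe_nnnorm, Real.norm_eq_abs] using α.2.2

/-- The bound `|t j| ≤ 1` in `I(J)` follows from `∑ |t j| ≤ 1`. -/
lemma range_sum_smul_eq_image (v : J → M) :
    Set.range (fun α : IndexIJ J => ∑ j ∈ α.1.support, α.1 j • v j) =
      Finsupp.linearCombination ℝ v '' Finsupp.l1Seminorm.closedBall 0 1 := by
  have hball : {t : J →₀ ℝ | (∀ j, |t j| ≤ 1) ∧ ∑ j ∈ t.support, |t j| ≤ 1} =
      Finsupp.l1Seminorm.closedBall 0 1 := by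
    ext t
    rw [Seminorm.mem_closedBall_zero, Finsupp.l1Seminorm_apply]
    exact ⟨And.right, fun h => ⟨fun j => (t.abs_apply_le_sum_abs j).trans h, h⟩⟩
  rw [← hball, ← Subtype.range_coe_subtype, ← Set.range_comp]
  rfl

lemma convex_range_sum_smul (v : J → M) :
    Convex ℝ (Set.range fun α : IndexIJ J => ∑ j ∈ α.1.support, α.1 j • v j) := by
  rw [range_sum_smul_eq_image]
  exact (Finsupp.l1Seminorm.convex_closedBall 0 1).linear_image _

lemma balanced_range_sum_smul (v : J → M) :
    Balanced ℝ (Set.range fun α : IndexIJ J => ∑ j ∈ α.1.support, α.1 j • v j) := by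
  rw [range_sum_smul_eq_image]
  exact (Finsupp.l1Seminorm.balanced_closedBall_zero 1).linear_image _

lemma apply_sum_smul_le (φ : M → ℝ≥0∞) (hadd : ∀ x y, φ (x + y) ≤ φ x + φ y)
    (hsmul : ∀ (r : ℝ) x, φ (r • x) ≤ ‖r‖₊ * φ x) (α : IndexIJ J) {v : J → M} {C : ℝ≥0∞}
    (hv : ∀ j, φ (v j) ≤ C) :
    φ (∑ j ∈ α.1.support, α.1 j • v j) ≤ C := by
  have hzero : φ 0 ≤ 0 := by simpa using hsmul 0 0
  calc φ (∑ j ∈ α.1.support, α.1 j • v j)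
      ≤ ∑ j ∈ α.1.support, φ (α.1 j • v j) := Finset.le_sum_of_subadditive φ hzero hadd _ _
    _ ≤ ∑ j ∈ α.1.support, (‖α.1 j‖₊ : ℝ≥0∞) * C :=
      Finset.sum_le_sum fun j _ => (hsmul _ _).trans (mul_le_mul_right (hv j) _)
    _ = ((∑ j ∈ α.1.support, ‖α.1 j‖₊ : ℝ≥0) : ℝ≥0∞) * C := by
      rw [← Finset.sum_mul, ENNReal.ofNNReal_finsetSum]
    _ ≤ 1 * C := by gcongr; exact_mod_cast α.sum_nnnorm_le_one
    _ = C := one_mul C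

end IndexIJ

lemma ennHausdorff_le_of_subset_of_subset {X : Type*} {d : X → X → ℝ≥0∞} (hd : ∀ x, d x x = 0)
    {s s' t : Set X} (hs : s ⊆ s') (hs' : s' ⊆ t) :
    ennHausdorff d s' t ≤ ennHausdorff d s t := by
  refine max_le ?_ (le_max_of_le_right ?_)
  · exact iSup₂_le fun x hx => (iInf₂_le x (hs' hx)).trans (hd x).le |>.trans zero_le
  · exact iSup₂_mono fun y _ => le_iInf₂ fun x hx => iInf₂_le x (hs hx)

namespace MQVB

variable {F : ℝ≥0 → ℝ≥0 → ℝ≥0 → ℝ≥0 → ℝ≥0} {H : ℝ≥0 → ℝ≥0 → ℝ≥0} {J : Type} (Am : MQVB F H)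

lemma ip_smul_left (c : ℂ) (ω ζ : Am.carrier) : Am.ip (c • ω) ζ = c • Am.ip ω ζ := by
  rw [← one_smul Am.base.carrier ω, ← smul_assoc, Am.hilbert.2.1, smul_mul_assoc, one_mul,
    one_smul]

@[simps]
def ipLeft (ζ : Am.carrier) : Am.carrier →ₗ[ℂ] Am.base.carrier where
  toFun ω := Am.ip ω ζ
  map_add' ω η := Am.hilbert.1 ω η ζ
  map_smul' c ω := Am.ip_smul_left c ω ζ

/-- The inner product is conjugate-linear in its second argument, hence only `ℝ`-linear. -/
@[simps]
def ipRight (ζ : Am.carrier) : Am.carrier →ₗ[ℝ] Am.base.carrier where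
  toFun ω := Am.ip ζ ω
  map_add' ω η := by rw [Am.hilbert.2.2.1, Am.hilbert.1, star_add, ← Am.hilbert.2.2.1,
    ← Am.hilbert.2.2.1]
  map_smul' r ω := by
    rw [Am.hilbert.2.2.1, ← Complex.coe_smul, Am.ip_smul_left, star_smul, Complex.star_def,
      Complex.conj_ofReal, Complex.coe_smul, ← Am.hilbert.2.2.1]
    rfl

lemma ip_sum_smul_left (s : Finset J) (t : J → ℝ) (v : J → Am.carrier) (ζ : Am.carrier) :
    Am.ip (∑ j ∈ s, t j • v j) ζ = ∑ j ∈ s, t j • Am.ip (v j) ζ := by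
  have h := map_sum ((Am.ipLeft ζ).restrictScalars ℝ) (fun j => t j • v j) s
  simpa only [map_smul, LinearMap.restrictScalars_apply, ipLeft_apply] using h

lemma ip_sum_smul_right (s : Finset J) (t : J → ℝ) (v : J → Am.carrier) (ζ : Am.carrier) :
    Am.ip ζ (∑ j ∈ s, t j • v j) = ∑ j ∈ s, t j • Am.ip ζ (v j) := by
  have h := map_sum (Am.ipRight ζ) (fun j => t j • v j) s
  simpa only [map_smul, ipRight_apply] using h

lemma mkD_self (ω : Am.carrier) : Am.mkD ω ω = 0 := by
  refine le_antisymm (iSup₂_le fun ζ _ => ?_) zero_le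
  rw [sub_self, show Am.ip 0 ζ = 0 from (Am.ipLeft ζ).map_zero, nnnorm_zero, ENNReal.coe_zero]

lemma Dn_sum_smul_le (α : IndexIJ J) {v : J → Am.carrier} {C : ℝ≥0∞}
    (hv : ∀ j, Am.Dn (v j) ≤ C) : Am.Dn (∑ j ∈ α.1.support, α.1 j • v j) ≤ C :=
  α.apply_sum_smul_le Am.Dn Am.dnorm.1
    (fun r ω => by rw [← Complex.coe_smul, Am.dnorm.2.1, Complex.nnnorm_real]) hv

end MQVB

namespace Bridge

variable {F : ℝ≥0 → ℝ≥0 → ℝ≥0 → ℝ≥0 → ℝ≥0} {A B : QCMS F} (γ : Bridge A B)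

lemma bn_add_le (a a' : A.carrier) (b b' : B.carrier) :
    γ.bn (a + a') (b + b') ≤ γ.bn a b + γ.bn a' b' := by
  have h : γ.πA (a + a') * γ.x - γ.x * γ.πB (b + b') =
      (γ.πA a * γ.x - γ.x * γ.πB b) + (γ.πA a' * γ.x - γ.x * γ.πB b') := by
    rw [map_add, map_add, add_mul, mul_add]
    abel
  simp only [bn, h]
  exact_mod_cast nnnorm_add_le _ _

lemma bn_smul (r : ℝ) (a : A.carrier) (b : B.carrier) :
    γ.bn (r • a) (r • b) = ‖r‖₊ * γ.bn a b := by
  have h : γ.πA (r • a) * γ.x - γ.x * γ.πB (r • b) = r • (γ.πA a * γ.x - γ.x * γ.πB b) := by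
    simp only [← Complex.coe_smul, map_smul, smul_mul_assoc, mul_smul_comm, smul_sub]
  simp only [bn, h, nnnorm_smul, ENNReal.coe_mul]

lemma bn_sum_smul_le {J : Type} (α : IndexIJ J) {a : J → A.carrier} {b : J → B.carrier}
    {C : ℝ≥0∞} (h : ∀ j, γ.bn (a j) (b j) ≤ C) :
    γ.bn (∑ j ∈ α.1.support, α.1 j • a j) (∑ j ∈ α.1.support, α.1 j • b j) ≤ C := by
  have := α.apply_sum_smul_le (fun p : A.carrier × B.carrier => γ.bn p.1 p.2)
    (fun p q => γ.bn_add_le p.1 q.1 p.2 q.2) (fun r p => (γ.bn_smul r p.1 p.2).le)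
    (v := fun j => (a j, b j)) h
  simpa only [Prod.fst_sum, Prod.snd_sum, Prod.smul_fst, Prod.smul_snd] using this

end Bridge

namespace ModularBridge

variable {F : ℝ≥0 → ℝ≥0 → ℝ≥0 → ℝ≥0 → ℝ≥0} {H : ℝ≥0 → ℝ≥0 → ℝ≥0} {Am Bm : MQVB F H}
  (γ : ModularBridge Am Bm)

lemma bn_ip_anchor_le_deck (ω : Am.carrier) (η : Bm.carrier) (j : γ.J) :
    γ.toBridge.bn (Am.ip ω (γ.anchor j)) (Bm.ip η (γ.coanchor j)) ≤ γ.deck ω η :=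
  le_iSup_of_le j (le_max_left _ _)

lemma bn_anchor_ip_le_deck (ω : Am.carrier) (η : Bm.carrier) (j : γ.J) :
    γ.toBridge.bn (Am.ip (γ.anchor j) ω) (Bm.ip (γ.coanchor j) η) ≤ γ.deck ω η :=
  le_iSup_of_le j (le_max_right _ _)

lemma deck_sum_smul_le {I : Type} (α : IndexIJ I) {ω : I → Am.carrier} {η : I → Bm.carrier}
    {C : ℝ≥0∞} (h : ∀ i, γ.deck (ω i) (η i) ≤ C) :
    γ.deck (∑ i ∈ α.1.support, α.1 i • ω i) (∑ i ∈ α.1.support, α.1 i • η i) ≤ C := by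
  refine iSup_le fun j => max_le ?_ ?_
  · rw [Am.ip_sum_smul_left, Bm.ip_sum_smul_left]
    exact γ.toBridge.bn_sum_smul_le α fun i => (γ.bn_ip_anchor_le_deck _ _ j).trans (h i)
  · rw [Am.ip_sum_smul_right, Bm.ip_sum_smul_right]
    exact γ.toBridge.bn_sum_smul_le α fun i => (γ.bn_anchor_ip_le_deck _ _ j).trans (h i)

lemma Dn_cohAnchor_le_one (α : IndexIJ γ.J) : Am.Dn (cohAnchor γ α) ≤ 1 :=
  Am.Dn_sum_smul_le α γ.anchor_le

lemma Dn_cohCoanchor_le_one (α : IndexIJ γ.J) : Bm.Dn (cohCoanchor γ α) ≤ 1 :=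
  Bm.Dn_sum_smul_le α γ.coanchor_le

@[simps]
def coh : ModularBridge Am Bm where
  J := IndexIJ γ.J
  toBridge := γ.toBridge
  x_norm := γ.x_norm
  anchor := cohAnchor γ
  coanchor := cohCoanchor γ
  anchor_le := γ.Dn_cohAnchor_le_one
  coanchor_le := γ.Dn_cohCoanchor_le_one

lemma range_anchor_subset_coh : Set.range γ.anchor ⊆ Set.range γ.coh.anchor := by
  rintro _ ⟨j, rfl⟩
  exact ⟨IndexIJ.single j, IndexIJ.sum_smul_single j γ.anchor⟩

lemma range_coanchor_subset_coh : Set.range γ.coanchor ⊆ Set.range γ.coh.coanchor := by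
  rintro _ ⟨j, rfl⟩
  exact ⟨IndexIJ.single j, IndexIJ.sum_smul_single j γ.coanchor⟩

lemma deck_coh (ω : Am.carrier) (η : Bm.carrier) : γ.coh.deck ω η = γ.deck ω η := by
  refine le_antisymm (iSup_le fun (α : IndexIJ γ.J) => max_le ?_ ?_) (iSup_le fun j => ?_)
  · rw [coh_toBridge, coh_anchor, coh_coanchor, cohAnchor, cohCoanchor, Am.ip_sum_smul_right,
      Bm.ip_sum_smul_right]
    exact γ.toBridge.bn_sum_smul_le α (γ.bn_ip_anchor_le_deck ω η)
  · rw [coh_toBridge, coh_anchor, coh_coanchor, cohAnchor, cohCoanchor, Am.ip_sum_smul_left,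
      Bm.ip_sum_smul_left]
    exact γ.toBridge.bn_sum_smul_le α (γ.bn_anchor_ip_le_deck ω η)
  · refine le_iSup_of_le (IndexIJ.single j) ?_
    rw [coh_toBridge, coh_anchor, coh_coanchor, cohAnchor, cohCoanchor, IndexIJ.sum_smul_single,
      IndexIJ.sum_smul_single]

lemma modularReach_coh_le : γ.coh.modularReach ≤ γ.modularReach := by
  refine iSup_le fun α => ?_
  rw [deck_coh]
  exact γ.deck_sum_smul_le α fun j => le_iSup_of_le j le_rfl

lemma imprint_coh_le : γ.coh.imprint ≤ γ.imprint :=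
  max_le_max
    (ennHausdorff_le_of_subset_of_subset Am.mkD_self γ.range_anchor_subset_coh
      (Set.range_subset_iff.2 γ.coh.anchor_le))
    (ennHausdorff_le_of_subset_of_subset Bm.mkD_self γ.range_coanchor_subset_coh
      (Set.range_subset_iff.2 γ.coh.coanchor_le))

lemma length_coh_le : γ.coh.length ≤ γ.length :=
  max_le_max le_rfl (add_le_add γ.imprint_coh_le γ.modularReach_coh_le)

end ModularBridge

theorem stmt0_general {F : ℝ≥0 → ℝ≥0 → ℝ≥0 → ℝ≥0 → ℝ≥0} {H : ℝ≥0 → ℝ≥0 → ℝ≥0}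
    (Am Bm : MQVB F H) (γ : ModularBridge Am Bm) :
    ∃ (hω : ∀ α : IndexIJ γ.J, Am.Dn (cohAnchor γ α) ≤ 1)
      (hη : ∀ α : IndexIJ γ.J, Bm.Dn (cohCoanchor γ α) ≤ 1),
      let γ' : ModularBridge Am Bm :=
        { J := IndexIJ γ.J
          toBridge := γ.toBridge
          x_norm := γ.x_norm
          anchor := cohAnchor γ
          coanchor := cohCoanchor γ
          anchor_le := hω
          coanchor_le := hη }
      γ'.toBridge = γ.toBridge ∧
      γ'.length ≤ γ.length ∧
      (∀ (ω : Am.carrier) (η : Bm.carrier), γ'.deck ω η = γ.deck ω η) ∧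
      Convex ℝ (Set.range γ'.anchor) ∧ Balanced ℝ (Set.range γ'.anchor) ∧
      Convex ℝ (Set.range γ'.coanchor) ∧ Balanced ℝ (Set.range γ'.coanchor) :=
  ⟨γ.Dn_cohAnchor_le_one, γ.Dn_cohCoanchor_le_one, rfl, γ.length_coh_le, γ.deck_coh,
    IndexIJ.convex_range_sum_smul γ.anchor, IndexIJ.balanced_range_sum_smul γ.anchor,
    IndexIJ.convex_range_sum_smul γ.coanchor, IndexIJ.balanced_range_sum_smul γ.coanchor⟩

theorem stmt0 {F : ℝ≥0 → ℝ≥0 → ℝ≥0 → ℝ≥0 → ℝ≥0} {H : ℝ≥0 → ℝ≥0 → ℝ≥0}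
    (hFH : PermissiblePair F H) (Am Bm : MQVB F H) (γ : ModularBridge Am Bm) :
    ∃ (hω : ∀ α : IndexIJ γ.J, Am.Dn (cohAnchor γ α) ≤ 1)
      (hη : ∀ α : IndexIJ γ.J, Bm.Dn (cohCoanchor γ α) ≤ 1),
      let γ' : ModularBridge Am Bm :=
        { J := IndexIJ γ.J
          toBridge := γ.toBridge
          x_norm := γ.x_norm
          anchor := cohAnchor γ
          coanchor := cohCoanchor γ
          anchor_le := hω
          coanchor_le := hη }
      γ'.toBridge = γ.toBridge ∧
      γ'.length ≤ γ.length ∧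
      (∀ (ω : Am.carrier) (η : Bm.carrier), γ'.deck ω η = γ.deck ω η) ∧
      Convex ℝ (Set.range γ'.anchor) ∧ Balanced ℝ (Set.range γ'.anchor) ∧
      Convex ℝ (Set.range γ'.coanchor) ∧ Balanced ℝ (Set.range γ'.coanchor) :=
  stmt0_general Am Bm γ
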